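/- Suppose a sequence of probabilities satisfies sup_{k>0, t≥0} t² P(Z(t)=k) ≤ C₁ < ∞, and uniformly in 0 < k ≤ Ct, t² e^{k/(Bt)} P(Z(t)=k) → 1/B². If φ(t) = o(t) with φ(t) → ∞, then Σ_{1 ≤ k ≤ Bφ(t)} P(Z(t)=k) ~ φ(t)/(B t²) as t → ∞. -/

import Mathlib

/-!
For `k ≤ Bφ(t)` we have `k / (Bt) ≤ φ(t) / t → 0`, so the factor `e^{k/(Bt)}` in the local limit
theorem tends to `1` uniformly and `t² P(t, k) → 1/B²` uniformly in `1 ≤ k ≤ Bφ(t)`. The sum is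
therefore `⌊Bφ(t)⌋₊` times an average of terms `~ 1/(B² t²)`, and `⌊Bφ(t)⌋₊ ~ Bφ(t)` since
`φ → ∞`.
-/

open Real Filter Topology Finset

namespace Filter

variable {α ι : Type*}

/-- Convergence along `l.uniformlyIn s` is convergence as `a → l`, uniformly in `i ∈ s a`. -/
def uniformlyIn (l : Filter α) (s : α → Set ι) : Filter (α × ι) :=
  l.comap Prod.fst ⊓ 𝓟 {p | p.2 ∈ s p.1}

theorem eventually_uniformlyIn_iff {l : Filter α} {s : α → Set ι} {q : α × ι → Prop} :
    (∀ᶠ p in l.uniformlyIn s, q p) ↔ ∀ᶠ a in l, ∀ i ∈ s a, q (a, i) := by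
  simp only [uniformlyIn, eventually_inf_principal, eventually_comap, Set.mem_ofPred_eq]
  refine eventually_congr (.of_forall fun a => ⟨fun h i hi => h _ rfl hi, ?_⟩)
  rintro h ⟨a', i⟩ rfl hi
  exact h i hi

theorem tendsto_fst_uniformlyIn {l : Filter α} {s : α → Set ι} :
    Tendsto Prod.fst (l.uniformlyIn s) l :=
  tendsto_comap.mono_left inf_le_left

theorem tendsto_sum_div_card_of_tendsto_uniformlyIn {l : Filter α} {s : α → Finset ι}
    {f : α → ι → ℝ} {L : ℝ} (hs : ∀ᶠ a in l, (s a).Nonempty)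
    (hf : Tendsto (fun p : α × ι => f p.1 p.2) (l.uniformlyIn fun a => ↑(s a)) (𝓝 L)) :
    Tendsto (fun a => (∑ i ∈ s a, f a i) / #(s a)) l (𝓝 L) := by
  rw [Metric.tendsto_nhds] at hf ⊢
  intro ε hε
  filter_upwards [hs, eventually_uniformlyIn_iff.mp (hf (ε / 2) (half_pos hε))] with a hne hclose
  have hcard : (0 : ℝ) < #(s a) := by exact_mod_cast hne.card_pos
  have hsum : |∑ i ∈ s a, (f a i - L)| ≤ #(s a) * (ε / 2) := by
    refine (abs_sum_le_sum_abs _ _).trans ?_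
    simpa [Real.dist_eq] using sum_le_sum fun i hi => (hclose i hi).le
  rw [Real.dist_eq, div_sub' hcard.ne', abs_div, abs_of_pos hcard, div_lt_iff₀ hcard]
  rw [sum_sub_distrib, sum_const, nsmul_eq_mul] at hsum
  nlinarith

end Filter

section LocalLimit

variable {P : ℝ → ℕ → ℝ} {B : ℝ} {φ : ℝ → ℝ}

theorem tendsto_sq_mul_uniformlyIn (hB : 0 < B)
    (hunif : ∀ C > (0:ℝ), ∀ δ > (0:ℝ), ∀ᶠ t in atTop, ∀ k : ℕ, 0 < k → (k : ℝ) ≤ C * t →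
      |t ^ 2 * Real.exp ((k : ℝ) / (B * t)) * P t k - 1 / B ^ 2| < δ)
    (hφo : Tendsto (fun t => φ t / t) atTop (𝓝 0)) :
    Tendsto (fun p : ℝ × ℕ => p.1 ^ 2 * P p.1 p.2)
      (atTop.uniformlyIn fun t => ↑(Icc 1 ⌊B * φ t⌋₊)) (𝓝 (1 / B ^ 2)) := by
  set F := atTop.uniformlyIn fun t => (↑(Icc 1 ⌊B * φ t⌋₊) : Set ℕ)
  have hrange : ∀ᶠ p in F, 0 < p.1 ∧ 0 < p.2 ∧ (p.2 : ℝ) ≤ B * φ p.1 ∧ φ p.1 ≤ p.1 := by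
    refine eventually_uniformlyIn_iff.mpr ?_
    filter_upwards [eventually_gt_atTop 0, hφo.eventually (eventually_le_nhds one_pos)]
      with t ht hφt k hk
    obtain ⟨hk1, hkN⟩ := mem_Icc.mp hk
    exact ⟨ht, hk1, (Nat.le_floor_iff' (by omega)).mp hkN, (div_le_one ht).mp hφt⟩
  have hratio : Tendsto (fun p : ℝ × ℕ => (p.2 : ℝ) / (B * p.1)) F (𝓝 0) := by
    refine tendsto_of_tendsto_of_tendsto_of_le_of_le' tendsto_const_nhds
      (hφo.comp tendsto_fst_uniformlyIn) ?_ ?_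
    · filter_upwards [hrange] with p ⟨ht, _⟩
      positivity
    · filter_upwards [hrange] with p ⟨ht, _, hkφ, _⟩
      rw [Function.comp_apply, div_le_div_iff₀ (by positivity) ht]
      nlinarith
  have hlocal : Tendsto (fun p : ℝ × ℕ => p.1 ^ 2 * exp ((p.2 : ℝ) / (B * p.1)) * P p.1 p.2) F
      (𝓝 (1 / B ^ 2)) := by
    rw [Metric.tendsto_nhds]
    intro δ hδ
    filter_upwards [hrange, tendsto_fst_uniformlyIn.eventually
      (hunif B hB δ hδ)] with p ⟨_, hk, hkφ, hφt⟩ hp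
    exact hp p.2 hk (by nlinarith)
  have hexp : Tendsto (fun p : ℝ × ℕ => exp (-((p.2 : ℝ) / (B * p.1)))) F (𝓝 1) := by
    simpa using hratio.neg.rexp
  have := hlocal.mul hexp
  rw [mul_one] at this
  refine this.congr fun p => ?_
  rw [exp_neg]
  field_simp

end LocalLimit

theorem stmt_14_general (P : ℝ → ℕ → ℝ) (B : ℝ) (hB : 0 < B)
    (hunif : ∀ C > (0:ℝ), ∀ δ > (0:ℝ), ∀ᶠ t in atTop, ∀ k : ℕ, 0 < k → (k : ℝ) ≤ C * t →
      |t ^ 2 * Real.exp ((k : ℝ) / (B * t)) * P t k - 1 / B ^ 2| < δ)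
    (φ : ℝ → ℝ)
    (hφo : Tendsto (fun t => φ t / t) atTop (nhds 0))
    (hφ : Tendsto φ atTop atTop) :
    Tendsto (fun t => (∑ k ∈ Finset.Icc 1 ⌊B * φ t⌋₊, P t k) * (B * t ^ 2 / φ t))
      atTop (nhds 1) := by
  have hBφ : Tendsto (fun t => B * φ t) atTop atTop := hφ.const_mul_atTop hB
  have hne : ∀ᶠ t in atTop, (Icc 1 ⌊B * φ t⌋₊).Nonempty := by
    filter_upwards [hBφ.eventually_ge_atTop 1] with t ht
    exact nonempty_Icc.mpr (Nat.le_floor (by simpa using ht))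
  have havg := tendsto_sum_div_card_of_tendsto_uniformlyIn (f := fun t k => t ^ 2 * P t k) hne
    (tendsto_sq_mul_uniformlyIn hB hunif hφo)
  have hlim := (havg.mul_const (B ^ 2)).mul (tendsto_nat_floor_div_atTop.comp hBφ)
  rw [div_mul_cancel₀ _ (by positivity), mul_one] at hlim
  refine hlim.congr' ?_
  filter_upwards [hne, hBφ.eventually_gt_atTop 0] with t hN hBφt
  have hN' : (⌊B * φ t⌋₊ : ℝ) ≠ 0 := by
    have := nonempty_Icc.mp hN
    positivity
  have hφt : φ t ≠ 0 := right_ne_zero_of_mul hBφt.ne'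
  simp only [Function.comp_apply, Nat.card_Icc, add_tsub_cancel_right, ← mul_sum]
  field_simp

theorem stmt_14 (P : ℝ → ℕ → ℝ) (B C₁ : ℝ) (hB : 0 < B) (hC₁ : 0 < C₁)
    (hnonneg : ∀ t k, 0 ≤ P t k)
    (hsup : ∀ t ≥ (0:ℝ), ∀ k : ℕ, 0 < k → t ^ 2 * P t k ≤ C₁)
    (hunif : ∀ C > (0:ℝ), ∀ δ > (0:ℝ), ∀ᶠ t in atTop, ∀ k : ℕ, 0 < k → (k : ℝ) ≤ C * t →
      |t ^ 2 * Real.exp ((k : ℝ) / (B * t)) * P t k - 1 / B ^ 2| < δ)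
    (φ : ℝ → ℝ) (hφpos : ∀ t, 0 < φ t)
    (hφo : Tendsto (fun t => φ t / t) atTop (nhds 0))
    (hφ : Tendsto φ atTop atTop) :
    Tendsto (fun t => (∑ k ∈ Finset.Icc 1 ⌊B * φ t⌋₊, P t k) * (B * t ^ 2 / φ t))
      atTop (nhds 1) :=
  stmt_14_general P B hB hunif φ hφo hφ
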